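/- Let n ≥ 1 and R > 0. In Euclidean space ℝⁿ with standard orthonormal basis e₁, …, eₙ, define the model function μ_R : ℝⁿ → ℝ by μ_R(x) = Σ_{i=1}^{n} Σ_{σ ∈ {+1,−1}} [ −(1/2)·((1 + R) − ‖x − σ·e_i‖)² + R²/2 ]. Then μ_R(x) = −(1 − R(n−1))·‖x‖² + o(‖x‖³) as x → 0; that is, the function x ↦ μ_R(x) + (1 − R(n−1))·‖x‖² is little-o of x ↦ ‖x‖³ as x → 0. -/
import Mathlib

set_option maxHeartbeats 1000000

open Asymptotics


lemma sqrt_taylor (u : ℝ) (hu : |u| ≤ 1/2) :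
    |Real.sqrt (1 + u) - (1 + u/2 - u^2/8 + u^3/16)| ≤ u^4 := by
  rw [abs_le] at hu
  obtain ⟨hl, hr⟩ := hu
  have h0 : (0:ℝ) ≤ 1 + u := by linarith
  set v := Real.sqrt (1 + u) with hv
  have hv0 : 0 ≤ v := Real.sqrt_nonneg _
  have hv2 : v ^ 2 = 1 + u := Real.sq_sqrt h0
  have h1 : 0 ≤ (1/2 + u) * u^2 := mul_nonneg (by linarith) (sq_nonneg u)
  have h2 : 0 ≤ (1/4 - u^2) * u^2 := mul_nonneg (by nlinarith) (sq_nonneg u)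
  have hp : (0:ℝ) ≤ 1 + u/2 - u^2/8 + u^3/16 - u^4 := by nlinarith [sq_nonneg u]
  have hq : (0:ℝ) ≤ 1 + u/2 - u^2/8 + u^3/16 + u^4 := by nlinarith [sq_nonneg u, sq_nonneg (u^2)]
  rw [abs_le]
  constructor
  · -- p - u^4 ≤ v
    have hsq : (1 + u/2 - u^2/8 + u^3/16 - u^4)^2 ≤ v^2 := by
      rw [hv2]; nlinarith [sq_nonneg u, sq_nonneg (u^2), sq_nonneg (u^3), sq_nonneg (u*(u-1)), sq_nonneg (u^2*(u-1))]
    have := (pow_le_pow_iff_left₀ hp hv0 (by norm_num : 2 ≠ 0)).mp hsq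
    linarith
  · have hsq : v^2 ≤ (1 + u/2 - u^2/8 + u^3/16 + u^4)^2 := by
      rw [hv2]; nlinarith [sq_nonneg u, sq_nonneg (u^2), sq_nonneg (u^3), sq_nonneg (u*(u+1)), sq_nonneg (u^2*(u+1))]
    have := (pow_le_pow_iff_left₀ hv0 hq (by norm_num : 2 ≠ 0)).mp hsq
    linarith



lemma pair_bound (s t : ℝ) (hs : 0 ≤ s) (ht : t^2 ≤ s) (hs' : s ≤ 1/36) :
    |Real.sqrt (1 + (s - 2*t)) + Real.sqrt (1 + (s + 2*t)) - 2 - s + t^2| ≤ 200 * s^2 := by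
  have ht6 : |t| ≤ 1/6 := by
    rw [abs_le]; constructor <;> nlinarith [sq_nonneg (t - 1/6), sq_nonneg (t + 1/6)]
  rw [abs_le] at ht6
  have hu1 : |s - 2*t| ≤ 1/2 := by rw [abs_le]; constructor <;> linarith
  have hu2 : |s + 2*t| ≤ 1/2 := by rw [abs_le]; constructor <;> linarith
  have h1 := sqrt_taylor (s - 2*t) hu1
  have h2 := sqrt_taylor (s + 2*t) hu2
  rw [abs_le] at h1 h2
  have hq1 : (s - 2*t)^2 ≤ 9*s := by nlinarith [sq_nonneg (s + 2*t)]
  have hq2 : (s + 2*t)^2 ≤ 9*s := by nlinarith [sq_nonneg (s - 2*t)]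
  have hq1' : (s - 2*t)^4 ≤ 81*s^2 := by
    have h := mul_le_mul hq1 hq1 (sq_nonneg _) (by linarith)
    calc (s - 2*t)^4 = (s-2*t)^2 * (s-2*t)^2 := by ring
      _ ≤ (9*s) * (9*s) := h
      _ = 81*s^2 := by ring
  have hq2' : (s + 2*t)^4 ≤ 81*s^2 := by
    have h := mul_le_mul hq2 hq2 (sq_nonneg _) (by linarith)
    calc (s + 2*t)^4 = (s+2*t)^2 * (s+2*t)^2 := by ring
      _ ≤ (9*s) * (9*s) := h
      _ = 81*s^2 := by ring
  have hst : s * t^2 ≤ s^2 := by nlinarith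
  have hs3 : s^3 ≤ s^2 * (1/36) := by
    nlinarith [mul_nonneg (sq_nonneg s) (show (0:ℝ) ≤ 1/36 - s by linarith)]
  -- the polynomial middle part
  have hPup : -s^2/4 + s^3/8 + (3/2)*(s*t^2) ≤ 2*s^2 := by
    linarith [hs3, hst, sq_nonneg s]
  have hPlo : -(2*s^2) ≤ -s^2/4 + s^3/8 + (3/2)*(s*t^2) := by
    have h3 : 0 ≤ s^3 := by positivity
    have h4 : 0 ≤ s*t^2 := mul_nonneg hs (sq_nonneg t)
    linarith [sq_nonneg s]
  rw [abs_le]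
  constructor
  · linarith only [h1.1, h2.1, hPlo, hq1', hq2', sq_nonneg s]
  · linarith only [h1.2, h2.2, hPup, hq1', hq2', sq_nonneg s]

/-- The model function `μ_R`, built from the distance functions to the `2n` points
`±e_i` of an orthonormal strainer, agrees with `-(1 - R(n-1))‖x‖²` up to `o(‖x‖³)`
at the origin. -/


theorem model_function_expansion (n : ℕ) (hn : 1 ≤ n) (R : ℝ) (hR : 0 < R) :
    (fun x : EuclideanSpace ℝ (Fin n) =>
        (∑ i : Fin n,
          ((-(1 / 2) * ((1 + R) - ‖x - EuclideanSpace.single i (1 : ℝ)‖) ^ 2 + R ^ 2 / 2)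
            + (-(1 / 2) * ((1 + R) - ‖x - (-EuclideanSpace.single i (1 : ℝ))‖) ^ 2 + R ^ 2 / 2)))
          + (1 - R * ((n : ℝ) - 1)) * ‖x‖ ^ 2)
      =o[nhds 0] (fun x : EuclideanSpace ℝ (Fin n) => ‖x‖ ^ 3) := by
  have key : ∀ x : EuclideanSpace ℝ (Fin n), ‖x‖ ≤ 1/6 →
      |(∑ i : Fin n,
          ((-(1 / 2) * ((1 + R) - ‖x - EuclideanSpace.single i (1 : ℝ)‖) ^ 2 + R ^ 2 / 2)
            + (-(1 / 2) * ((1 + R) - ‖x - (-EuclideanSpace.single i (1 : ℝ))‖) ^ 2 + R ^ 2 / 2)))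
          + (1 - R * ((n : ℝ) - 1)) * ‖x‖ ^ 2| ≤ ((1+R) * (n * 200)) * ‖x‖^4 := by
    intro x hx
    have hsum : ∑ i, (x i)^2 = ‖x‖^2 := by
      rw [EuclideanSpace.norm_eq, Real.sq_sqrt (Finset.sum_nonneg fun i _ => sq_nonneg _)]
      simp [Real.norm_eq_abs, sq_abs]
    have hxi : ∀ i, (x i)^2 ≤ ‖x‖^2 := fun i =>
      hsum ▸ Finset.single_le_sum (f := fun j => (x j)^2) (fun j _ => sq_nonneg _) (Finset.mem_univ i)
    have hA : ∀ i, ‖x - EuclideanSpace.single i (1:ℝ)‖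
        = Real.sqrt (1 + (‖x‖^2 - 2 * x i)) := by
      intro i
      rw [← Real.sqrt_sq (norm_nonneg (x - EuclideanSpace.single i (1:ℝ)))]
      congr 1
      rw [norm_sub_sq_real, EuclideanSpace.inner_single_right, EuclideanSpace.norm_single]
      simp
      ring
    have hB : ∀ i, ‖x - (-EuclideanSpace.single i (1:ℝ))‖
        = Real.sqrt (1 + (‖x‖^2 + 2 * x i)) := by
      intro i
      rw [sub_neg_eq_add, ← Real.sqrt_sq (norm_nonneg (x + EuclideanSpace.single i (1:ℝ)))]
      congr 1
      rw [norm_add_sq_real, EuclideanSpace.inner_single_right, EuclideanSpace.norm_single]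
      simp
      ring
    set E : Fin n → ℝ := fun i => Real.sqrt (1 + (‖x‖^2 - 2 * x i))
      + Real.sqrt (1 + (‖x‖^2 + 2 * x i)) - 2 - ‖x‖^2 + (x i)^2 with hE
    have hpair : ∀ i : Fin n,
        ((-(1 / 2) * ((1 + R) - ‖x - EuclideanSpace.single i (1 : ℝ)‖) ^ 2 + R ^ 2 / 2)
          + (-(1 / 2) * ((1 + R) - ‖x - (-EuclideanSpace.single i (1 : ℝ))‖) ^ 2 + R ^ 2 / 2))
        = (1+R) * E i + R * ‖x‖^2 - (1+R) * (x i)^2 := by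
      intro i
      rw [hA i, hB i, hE]
      have h1 : (Real.sqrt (1 + (‖x‖^2 - 2 * x i)))^2 = 1 + (‖x‖^2 - 2 * x i) :=
        Real.sq_sqrt (by nlinarith [sq_nonneg (1 - x i), hxi i])
      have h2 : (Real.sqrt (1 + (‖x‖^2 + 2 * x i)))^2 = 1 + (‖x‖^2 + 2 * x i) :=
        Real.sq_sqrt (by nlinarith [sq_nonneg (1 + x i), hxi i])
      linear_combination (-(1/2) : ℝ) * h1 + (-(1/2) : ℝ) * h2
    have hfx : (∑ i : Fin n,
          ((-(1 / 2) * ((1 + R) - ‖x - EuclideanSpace.single i (1 : ℝ)‖) ^ 2 + R ^ 2 / 2)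
            + (-(1 / 2) * ((1 + R) - ‖x - (-EuclideanSpace.single i (1 : ℝ))‖) ^ 2 + R ^ 2 / 2)))
          + (1 - R * ((n : ℝ) - 1)) * ‖x‖ ^ 2 = (1+R) * ∑ i, E i := by
      rw [Finset.sum_congr rfl (fun i _ => hpair i)]
      rw [Finset.sum_sub_distrib, Finset.sum_add_distrib, ← Finset.mul_sum,
        Finset.sum_const, Finset.card_univ, Fintype.card_fin, ← Finset.mul_sum, hsum,
        nsmul_eq_mul]
      ring
    rw [hfx, abs_mul, abs_of_pos (by linarith : (0:ℝ) < 1 + R)]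
    have hEb : ∀ i : Fin n, |E i| ≤ 200 * (‖x‖^2)^2 := by
      intro i
      exact pair_bound (‖x‖^2) (x i) (sq_nonneg _) (hxi i)
        (by nlinarith [norm_nonneg x])
    calc (1+R) * |∑ i, E i| ≤ (1+R) * ∑ i, |E i| :=
          mul_le_mul_of_nonneg_left (Finset.abs_sum_le_sum_abs _ _) (by linarith)
      _ ≤ (1+R) * ∑ _i : Fin n, 200 * (‖x‖^2)^2 :=
          mul_le_mul_of_nonneg_left (Finset.sum_le_sum fun i _ => hEb i) (by linarith)
      _ = ((1+R) * (n * 200)) * ‖x‖^4 := by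
          rw [Finset.sum_const, Finset.card_univ, Fintype.card_fin, nsmul_eq_mul]; ring
  have hbigO : (fun x : EuclideanSpace ℝ (Fin n) =>
        (∑ i : Fin n,
          ((-(1 / 2) * ((1 + R) - ‖x - EuclideanSpace.single i (1 : ℝ)‖) ^ 2 + R ^ 2 / 2)
            + (-(1 / 2) * ((1 + R) - ‖x - (-EuclideanSpace.single i (1 : ℝ))‖) ^ 2 + R ^ 2 / 2)))
          + (1 - R * ((n : ℝ) - 1)) * ‖x‖ ^ 2)
      =O[nhds 0] (fun x : EuclideanSpace ℝ (Fin n) => ‖x‖ ^ 4) := by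
    rw [isBigO_iff]
    refine ⟨(1+R) * (n * 200), ?_⟩
    filter_upwards [Metric.ball_mem_nhds (0 : EuclideanSpace ℝ (Fin n))
      (by norm_num : (0:ℝ) < 1/6)] with x hx
    rw [mem_ball_zero_iff] at hx
    have := key x hx.le
    rw [Real.norm_eq_abs]
    calc |_| ≤ ((1+R) * (n * 200)) * ‖x‖^4 := this
      _ = ((1+R) * (n * 200)) * ‖(‖x‖^4 : ℝ)‖ := by
          rw [Real.norm_of_nonneg (by positivity)]
  have hlo : (fun x : EuclideanSpace ℝ (Fin n) => ‖x‖ ^ 4)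
      =o[nhds 0] (fun x : EuclideanSpace ℝ (Fin n) => ‖x‖ ^ 3) := by
    rw [isLittleO_iff]
    intro c hc
    filter_upwards [Metric.ball_mem_nhds (0 : EuclideanSpace ℝ (Fin n)) hc] with x hx
    rw [mem_ball_zero_iff] at hx
    rw [Real.norm_of_nonneg (by positivity), Real.norm_of_nonneg (by positivity)]
    calc ‖x‖^4 = ‖x‖ * ‖x‖^3 := by ring
      _ ≤ c * ‖x‖^3 := mul_le_mul_of_nonneg_right hx.le (by positivity)
  exact hbigO.trans_isLittleO hlo
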